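/- Let i, j ∈ {0,1} and let U_{i,j} ⊆ ℂP¹ × ℂP¹ be the open set of pairs ([a₀:a₁], [b₀:b₁]) with a_i ≠ 0 and b_j ≠ 0. The assignment 𝔗_{i,j}(h, [b₀:b₁]) = σ_j(b₀, b₁)·h·σ_i(c₀, c₁)⁻¹, where (c₀, c₁) are the complex components of (b₀ + b₁·j)·h, is a well-defined continuous map from Φ⁻¹(U_{i,j}) ⊆ S³ × ℂP¹ to the unit circle S¹ ⊂ ℂ ⊂ ℍ, and the map (Φ, 𝔗_{i,j}) : Φ⁻¹(U_{i,j}) → U_{i,j} × S¹ is a homeomorphism. -/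

import Mathlib

open Quaternion

noncomputable section

/-- The embedding of `ℂ` into the quaternions `ℍ` as the real span of `1` and `i`. -/
def cq (z : ℂ) : ℍ[ℝ] := ⟨z.re, z.im, 0, 0⟩

/-- The imaginary unit `j` of the quaternions. -/
def jq : ℍ[ℝ] := ⟨0, 0, 1, 0⟩

/-- `σ₀(a₀,a₁) = (1 + (a₁/a₀)·j)/‖1 + (a₁/a₀)·j‖`, defined for `a₀ ≠ 0`. -/
def sigma0 (a₀ a₁ : ℂ) : ℍ[ℝ] := ‖cq 1 + cq (a₁ / a₀) * jq‖⁻¹ • (cq 1 + cq (a₁ / a₀) * jq)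

/-- `σ₁(a₀,a₁) = (a₀/a₁ + j)/‖a₀/a₁ + j‖`, defined for `a₁ ≠ 0`. -/
def sigma1 (a₀ a₁ : ℂ) : ℍ[ℝ] := ‖cq (a₀ / a₁) + jq‖⁻¹ • (cq (a₀ / a₁) + jq)

/-- The complex components of a quaternion: `q = c₀ + c₁·j` with
`c₀ = re q + (im_i q)·i` and `c₁ = im_j q + (im_k q)·i`. -/
def comps (q : ℍ[ℝ]) : ℂ × ℂ := (⟨q.re, q.imI⟩, ⟨q.imJ, q.imK⟩)

/-- The complex projective line `ℂP¹`, as the projectivization of `ℂ²`. -/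
abbrev CP1 := Projectivization ℂ (ℂ × ℂ)

/-- The quotient topology on `ℂP¹`. -/
instance : TopologicalSpace CP1 := instTopologicalSpaceQuotient

/-- `σ_j` for `j ∈ {0,1}`. -/
def sigma' (j : Fin 2) (a₀ a₁ : ℂ) : ℍ[ℝ] := if j = 0 then sigma0 a₀ a₁ else sigma1 a₀ a₁

/-- The subset `U_{i,j} ⊆ ℂP¹ × ℂP¹` of pairs `([a₀:a₁],[b₀:b₁])` with `a_i ≠ 0` and
`b_j ≠ 0`. -/
def Uset (i j : Fin 2) : Set (CP1 × CP1) :=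
  {p | (∃ (v : ℂ × ℂ) (hv : v ≠ 0), Projectivization.mk ℂ v hv = p.1 ∧
          (if i = 0 then v.1 else v.2) ≠ 0) ∧
       (∃ (w : ℂ × ℂ) (hw : w ≠ 0), Projectivization.mk ℂ w hw = p.2 ∧
          (if j = 0 then w.1 else w.2) ≠ 0)}

/-!
Through the complex components, `ℍ ≅ ℂ²` with `ℂ` acting on `ℍ` by left multiplication, so a
point of `ℂP¹` is a complex line `ℂ·q` in `ℍ`, and `Φ(h, ℓ) = (ℓ·h, ℓ)` where `S³` acts on lines
by right multiplication. On the chart `{aᵢ ≠ 0}` the unit quaternion `σᵢ(ℓ)` spans `ℓ`. Hence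
`σⱼ(ℓ)·h` and `σᵢ(ℓ·h)` span the same line, i.e. differ by a left complex factor, which is
`𝔗_{i,j}(h, ℓ)`; and `(ℓ', ℓ, z) ↦ (σⱼ(ℓ)⁻¹·z·σᵢ(ℓ'), ℓ)` inverts `(Φ, 𝔗_{i,j})`. Continuity is
checked on `ℂ² ∖ 0`, since `ℂP¹` carries the quotient topology and `S³` is compact.
-/

open Topology

lemma cq_eq_coe (z : ℂ) : cq z = (z : ℍ[ℝ]) := rfl

lemma cq_one : cq 1 = 1 := map_one Quaternion.ofComplex

lemma cq_mul (z w : ℂ) : cq (z * w) = cq z * cq w := map_mul Quaternion.ofComplex z w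

lemma real_smul_eq_cq_mul (r : ℝ) (q : ℍ[ℝ]) : r • q = cq r * q := by
  rw [Algebra.smul_def, cq_eq_coe, Quaternion.coeComplex_coe]
  rfl

lemma continuous_cq : Continuous cq :=
  Quaternion.ofComplex.toLinearMap.continuous_of_finiteDimensional

lemma comps_cq_mul (z : ℂ) (q : ℍ[ℝ]) : comps (cq z * q) = z • comps q := by
  apply Prod.ext <;> apply Complex.ext <;>
    simp [comps, cq_eq_coe, Quaternion.re_mul, Quaternion.imI_mul, Quaternion.imJ_mul,
      Quaternion.imK_mul]

def ofComps (v : ℂ × ℂ) : ℍ[ℝ] := cq v.1 + cq v.2 * jq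

def compsEquiv : ℍ[ℝ] ≃ₗ[ℝ] ℂ × ℂ where
  toFun := comps
  invFun := ofComps
  map_add' p q := by apply Prod.ext <;> apply Complex.ext <;> simp [comps]
  map_smul' r q := by apply Prod.ext <;> apply Complex.ext <;> simp [comps]
  left_inv q := by
    ext <;> simp [ofComps, comps, cq_eq_coe, Quaternion.re_mul, Quaternion.imI_mul,
      Quaternion.imJ_mul, Quaternion.imK_mul] <;> simp [jq]
  right_inv v := by
    apply Prod.ext <;> apply Complex.ext <;> simp [ofComps, comps, cq_eq_coe, Quaternion.re_mul,
      Quaternion.imI_mul, Quaternion.imJ_mul, Quaternion.imK_mul] <;> simp [jq]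

lemma comps_injective : Function.Injective comps := compsEquiv.injective

lemma comps_ofComps (v : ℂ × ℂ) : comps (ofComps v) = v := compsEquiv.right_inv v

lemma ofComps_comps (q : ℍ[ℝ]) : ofComps (comps q) = q := compsEquiv.left_inv q

lemma comps_ne_zero {q : ℍ[ℝ]} (hq : q ≠ 0) : comps q ≠ 0 :=
  compsEquiv.map_ne_zero_iff.2 hq

lemma ofComps_ne_zero {v : ℂ × ℂ} (hv : v ≠ 0) : ofComps v ≠ 0 :=
  compsEquiv.symm.map_ne_zero_iff.2 hv

lemma continuous_comps : Continuous comps :=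
  compsEquiv.toLinearMap.continuous_of_finiteDimensional

lemma continuous_ofComps : Continuous ofComps :=
  compsEquiv.symm.toLinearMap.continuous_of_finiteDimensional

lemma ofComps_smul (z : ℂ) (v : ℂ × ℂ) : ofComps (z • v) = cq z * ofComps v :=
  comps_injective (by rw [comps_cq_mul, comps_ofComps, comps_ofComps])

/-- Right multiplication by `h` in complex components: `ℂ`-linear since `ℂ` acts from the left. -/
def rightMulComps (h : ℍ[ℝ]) : (ℂ × ℂ) →ₗ[ℂ] ℂ × ℂ where
  toFun v := comps (ofComps v * h)
  map_add' v w := by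
    change compsEquiv (compsEquiv.symm (v + w) * h) = _
    simp only [map_add, add_mul]
    rfl
  map_smul' z v := by simp [ofComps_smul, mul_assoc, comps_cq_mul]

lemma rightMulComps_injective {h : ℍ[ℝ]} (hh : h ≠ 0) : Function.Injective (rightMulComps h) :=
  comps_injective.comp ((mul_left_injective₀ hh).comp compsEquiv.symm.injective)

local notation "S³" => Metric.sphere (0 : ℍ[ℝ]) 1

def hopf (p : S³ × CP1) : CP1 :=
  Projectivization.map (rightMulComps p.1)
    (rightMulComps_injective (ne_zero_of_mem_unit_sphere p.1)) p.2

def parametrisedHopf (p : S³ × CP1) : CP1 × CP1 := (hopf p, p.2)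

def lineOf (q : ℍ[ℝ]) (hq : q ≠ 0) : CP1 := Projectivization.mk ℂ (comps q) (comps_ne_zero hq)

lemma lineOf_ofComps {v : ℂ × ℂ} (hv : v ≠ 0) :
    lineOf (ofComps v) (ofComps_ne_zero hv) = Projectivization.mk ℂ v hv := by
  simp only [lineOf, comps_ofComps]

lemma lineOf_eq_lineOf_iff {p q : ℍ[ℝ]} (hp : p ≠ 0) (hq : q ≠ 0) :
    lineOf p hp = lineOf q hq ↔ ∃ z : ℂ, p = cq z * q := by
  simp only [lineOf, Projectivization.mk_eq_mk_iff', ← comps_cq_mul, comps_injective.eq_iff,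
    eq_comm]

lemma hopf_lineOf (h : S³) {q : ℍ[ℝ]} (hq : q ≠ 0) :
    hopf (h, lineOf q hq) = lineOf (q * h) (mul_ne_zero hq (ne_zero_of_mem_unit_sphere h)) := by
  simp only [hopf, lineOf, Projectivization.map_mk]
  congr 1
  exact congrArg (comps <| · * (h : ℍ[ℝ])) (ofComps_comps q)

def coord (i : Fin 2) (v : ℂ × ℂ) : ℂ := if i = 0 then v.1 else v.2

lemma coord_smul (i : Fin 2) (z : ℂ) (v : ℂ × ℂ) : coord i (z • v) = z * coord i v := by
  unfold coord
  split_ifs <;> rfl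

lemma continuous_coord (i : Fin 2) : Continuous (coord i) :=
  continuous_if_const _ (fun _ => continuous_fst) (fun _ => continuous_snd)

def affineOpen (i : Fin 2) : Set CP1 :=
  {ℓ | ∃ (v : ℂ × ℂ) (hv : v ≠ 0), Projectivization.mk ℂ v hv = ℓ ∧ coord i v ≠ 0}

lemma parametrisedHopf_mem_Uset_iff {i j : Fin 2} {x : S³ × CP1} :
    parametrisedHopf x ∈ Uset i j ↔ hopf x ∈ affineOpen i ∧ x.2 ∈ affineOpen j := Iff.rfl

lemma mk_mem_affineOpen_iff {i : Fin 2} {v : ℂ × ℂ} (hv : v ≠ 0) :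
    Projectivization.mk ℂ v hv ∈ affineOpen i ↔ coord i v ≠ 0 := by
  refine ⟨?_, fun hvi => ⟨v, hv, rfl, hvi⟩⟩
  rintro ⟨w, hw, hwv, hwi⟩
  obtain ⟨z, rfl⟩ := (Projectivization.mk_eq_mk_iff' ℂ w v hw hv).1 hwv
  rw [coord_smul] at hwi
  exact right_ne_zero_of_mul hwi

lemma sigma'_smul (i : Fin 2) (v : ℂ × ℂ) {z : ℂ} (hz : z ≠ 0) :
    sigma' i (z • v).1 (z • v).2 = sigma' i v.1 v.2 := by
  simp only [sigma', sigma0, sigma1, Prod.smul_fst, Prod.smul_snd, smul_eq_mul,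
    mul_div_mul_left _ _ hz]

lemma sigma'_eq_normalize {i : Fin 2} {v : ℂ × ℂ} (hv : coord i v ≠ 0) :
    sigma' i v.1 v.2 =
      ‖cq (coord i v)⁻¹ * ofComps v‖⁻¹ • (cq (coord i v)⁻¹ * ofComps v) := by
  have hdehomogenise : cq (coord i v)⁻¹ * ofComps v =
      if i = 0 then cq 1 + cq (v.2 / v.1) * jq else cq (v.1 / v.2) + jq := by
    unfold coord at hv ⊢
    split_ifs at hv ⊢ <;>
      simp only [ofComps, mul_add, ← mul_assoc, ← cq_mul, inv_mul_cancel₀ hv, div_eq_inv_mul,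
        cq_one, one_mul]
  rw [hdehomogenise, sigma']
  split_ifs <;> rfl

lemma cq_inv_coord_mul_ofComps_ne_zero {i : Fin 2} {v : ℂ × ℂ} (hv : v ≠ 0)
    (hvi : coord i v ≠ 0) : cq (coord i v)⁻¹ * ofComps v ≠ 0 :=
  mul_ne_zero ((map_ne_zero Quaternion.ofComplex).2 (inv_ne_zero hvi)) (ofComps_ne_zero hv)

def chartSection (i : Fin 2) : CP1 → ℍ[ℝ] :=
  Projectivization.lift (fun v => sigma' i v.1.1 v.1.2) <| by
    rintro ⟨a, ha⟩ ⟨b, hb⟩ z rfl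
    exact sigma'_smul i b (left_ne_zero_of_smul ha)

lemma chartSection_mk (i : Fin 2) {v : ℂ × ℂ} (hv : v ≠ 0) :
    chartSection i (Projectivization.mk ℂ v hv) = sigma' i v.1 v.2 := rfl

lemma norm_chartSection {i : Fin 2} {ℓ : CP1} (hℓ : ℓ ∈ affineOpen i) :
    ‖chartSection i ℓ‖ = 1 := by
  obtain ⟨v, hv, rfl, hvi⟩ := hℓ
  rw [chartSection_mk, sigma'_eq_normalize hvi]
  exact norm_smul_inv_norm (cq_inv_coord_mul_ofComps_ne_zero hv hvi)

lemma chartSection_ne_zero {i : Fin 2} {ℓ : CP1} (hℓ : ℓ ∈ affineOpen i) :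
    chartSection i ℓ ≠ 0 :=
  norm_ne_zero_iff.1 (by rw [norm_chartSection hℓ]; exact one_ne_zero)

lemma lineOf_chartSection {i : Fin 2} {ℓ : CP1} (hℓ : ℓ ∈ affineOpen i) :
    lineOf (chartSection i ℓ) (chartSection_ne_zero hℓ) = ℓ := by
  obtain ⟨v, hv, rfl, hvi⟩ := id hℓ
  conv_rhs => rw [← lineOf_ofComps hv]
  refine (lineOf_eq_lineOf_iff _ _).2 ⟨‖cq (coord i v)⁻¹ * ofComps v‖⁻¹ * (coord i v)⁻¹, ?_⟩
  rw [chartSection_mk, sigma'_eq_normalize hvi, real_smul_eq_cq_mul, cq_mul, mul_assoc]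

/-- `𝔗_{i,j}`. -/
def trivialisingMap (i j : Fin 2) (x : S³ × CP1) : ℍ[ℝ] :=
  chartSection j x.2 * x.1 * (chartSection i (hopf x))⁻¹

/-- Both `σⱼ(ℓ)·h` and `σᵢ(ℓ·h)` span the line `ℓ·h`, so they differ by a complex factor. -/
lemma exists_trivialisingMap_eq_cq {i j : Fin 2} {x : S³ × CP1}
    (hx : parametrisedHopf x ∈ Uset i j) : ∃ z : ℂ, trivialisingMap i j x = cq z := by
  obtain ⟨hi, hj⟩ := parametrisedHopf_mem_Uset_iff.1 hx
  have hline : lineOf (chartSection j x.2 * x.1)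
      (mul_ne_zero (chartSection_ne_zero hj) (ne_zero_of_mem_unit_sphere x.1)) =
      lineOf (chartSection i (hopf x)) (chartSection_ne_zero hi) := by
    rw [← hopf_lineOf x.1 (chartSection_ne_zero hj), lineOf_chartSection hj,
      lineOf_chartSection hi]
  obtain ⟨z, hz⟩ := (lineOf_eq_lineOf_iff _ _).1 hline
  exact ⟨z, by rw [trivialisingMap, hz, mul_inv_cancel_right₀ (chartSection_ne_zero hi)]⟩

lemma norm_trivialisingMap {i j : Fin 2} {x : S³ × CP1} (hx : parametrisedHopf x ∈ Uset i j) :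
    ‖trivialisingMap i j x‖ = 1 := by
  obtain ⟨hi, hj⟩ := parametrisedHopf_mem_Uset_iff.1 hx
  rw [trivialisingMap, norm_mul, norm_mul, norm_inv, norm_chartSection hi, norm_chartSection hj,
    norm_eq_of_mem_sphere x.1]
  norm_num

lemma hopf_eq_of_eq_inv_chartSection_mul {i j : Fin 2} {ℓ ℓ' : CP1} (hℓ : ℓ ∈ affineOpen j)
    (hℓ' : ℓ' ∈ affineOpen i) (z : ℂ) {h : S³}
    (hh : (h : ℍ[ℝ]) = (chartSection j ℓ)⁻¹ * cq z * chartSection i ℓ') : hopf (h, ℓ) = ℓ' := by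
  calc hopf (h, ℓ) = hopf (h, lineOf (chartSection j ℓ) (chartSection_ne_zero hℓ)) := by
        rw [lineOf_chartSection hℓ]
    _ = lineOf (chartSection j ℓ * h) _ := hopf_lineOf h _
    _ = lineOf (chartSection i ℓ') _ := by
        refine (lineOf_eq_lineOf_iff _ _).2 ⟨z, ?_⟩
        rw [hh, ← mul_assoc, ← mul_assoc, mul_inv_cancel₀ (chartSection_ne_zero hℓ), one_mul]
    _ = ℓ' := lineOf_chartSection hℓ'

lemma Topology.IsQuotientMap.continuousOn_of_comp {X Y Z : Type*} [TopologicalSpace X]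
    [TopologicalSpace Y] [TopologicalSpace Z] {f : X → Y} (hf : IsQuotientMap f) {s : Set Y}
    (hs : IsOpen s) {g : Y → Z} (hg : ContinuousOn (g ∘ f) (f ⁻¹' s)) : ContinuousOn g s := by
  rw [continuousOn_iff_continuous_domRestrict, (hf.restrictPreimage_isOpen hs).continuous_iff]
  exact continuousOn_iff_continuous_domRestrict.1 hg

lemma isQuotientMap_mk' :
    IsQuotientMap (Projectivization.mk' ℂ : {v : ℂ × ℂ // v ≠ 0} → CP1) :=
  isQuotientMap_quot_mk

lemma mk'_preimage_affineOpen (i : Fin 2) :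
    Projectivization.mk' ℂ ⁻¹' affineOpen i = {v | coord i v.1 ≠ 0} :=
  Set.ext fun v => mk_mem_affineOpen_iff v.2

lemma isOpen_affineOpen (i : Fin 2) : IsOpen (affineOpen i) := by
  rw [← isQuotientMap_mk'.isOpen_preimage, mk'_preimage_affineOpen]
  exact isOpen_ne_fun ((continuous_coord i).comp continuous_subtype_val) continuous_const

lemma continuousOn_chartSection (i : Fin 2) : ContinuousOn (chartSection i) (affineOpen i) := by
  refine isQuotientMap_mk'.continuousOn_of_comp (isOpen_affineOpen i) ?_
  rw [mk'_preimage_affineOpen]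
  have hcoord : Continuous fun v : {v : ℂ × ℂ // v ≠ 0} => coord i v.1 :=
    (continuous_coord i).comp continuous_subtype_val
  have hF : ContinuousOn (fun v : {v : ℂ × ℂ // v ≠ 0} => cq (coord i v.1)⁻¹ * ofComps v.1)
      {v | coord i v.1 ≠ 0} :=
    (continuous_cq.comp_continuousOn (hcoord.continuousOn.inv₀ fun _ hv => hv)).mul
      (continuous_ofComps.comp continuous_subtype_val).continuousOn
  refine (hF.norm.inv₀ fun v hv => ?_).smul hF |>.congr fun v hv => sigma'_eq_normalize hv
  exact norm_ne_zero_iff.2 (cq_inv_coord_mul_ofComps_ne_zero v.2 hv)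

lemma continuous_hopf : Continuous hopf := by
  refine isQuotientMap_mk'.continuous_lift_prod_right ?_
  exact isQuotientMap_mk'.continuous.comp <| Continuous.subtype_mk
    (continuous_comps.comp <| (continuous_ofComps.comp <| continuous_subtype_val.comp
      continuous_snd).mul (continuous_subtype_val.comp continuous_fst)) _

lemma continuous_parametrisedHopf : Continuous parametrisedHopf :=
  continuous_hopf.prodMk continuous_snd

lemma continuousOn_trivialisingMap (i j : Fin 2) :
    ContinuousOn (trivialisingMap i j) (parametrisedHopf ⁻¹' Uset i j) := by
  have hj : ContinuousOn (fun x : S³ × CP1 => chartSection j x.2)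
      (parametrisedHopf ⁻¹' Uset i j) :=
    (continuousOn_chartSection j).comp continuous_snd.continuousOn fun _ hx => hx.2
  have hi : ContinuousOn (fun x => chartSection i (hopf x)) (parametrisedHopf ⁻¹' Uset i j) :=
    (continuousOn_chartSection i).comp continuous_hopf.continuousOn fun _ hx => hx.1
  exact (hj.mul (continuous_subtype_val.comp continuous_fst).continuousOn).mul
    (hi.inv₀ fun _ hx => chartSection_ne_zero hx.1)

lemma trivialisingMap_mem_circle {i j : Fin 2} {x : S³ × CP1}
    (hx : parametrisedHopf x ∈ Uset i j) :
    ‖trivialisingMap i j x‖ = 1 ∧ (trivialisingMap i j x).imJ = 0 ∧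
      (trivialisingMap i j x).imK = 0 := by
  obtain ⟨z, hz⟩ := exists_trivialisingMap_eq_cq hx
  exact ⟨norm_trivialisingMap hx, by rw [hz]; rfl, by rw [hz]; rfl⟩

abbrev QuatCircle : Type := {z : ℍ[ℝ] // ‖z‖ = 1 ∧ z.imJ = 0 ∧ z.imK = 0}

lemma QuatCircle.coe_eq_cq (z : QuatCircle) : (z : ℍ[ℝ]) = cq ⟨z.1.re, z.1.imI⟩ := by
  ext
  exacts [rfl, rfl, z.2.2.1, z.2.2.2]

def trivialisationInvFun (i j : Fin 2) (p : Uset i j × QuatCircle) : ℍ[ℝ] :=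
  (chartSection j p.1.1.2)⁻¹ * p.2 * chartSection i p.1.1.1

lemma trivialisationInvFun_mem_sphere {i j : Fin 2} (p : Uset i j × QuatCircle) :
    trivialisationInvFun i j p ∈ S³ := by
  rw [mem_sphere_zero_iff_norm, trivialisationInvFun, norm_mul, norm_mul, norm_inv,
    norm_chartSection p.1.2.1, norm_chartSection p.1.2.2, p.2.2.1]
  norm_num

lemma hopf_trivialisationInvFun {i j : Fin 2} (p : Uset i j × QuatCircle) :
    hopf (⟨_, trivialisationInvFun_mem_sphere p⟩, p.1.1.2) = p.1.1.1 :=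
  hopf_eq_of_eq_inv_chartSection_mul p.1.2.2 p.1.2.1 _ <| by
    rw [← p.2.coe_eq_cq]
    rfl

lemma continuous_trivialisationInvFun (i j : Fin 2) : Continuous (trivialisationInvFun i j) := by
  have hU : Continuous fun p : Uset i j × QuatCircle => (p.1 : CP1 × CP1) :=
    continuous_subtype_val.comp continuous_fst
  have hj := (continuousOn_chartSection j).comp_continuous (continuous_snd.comp hU)
    fun p => p.1.2.2
  have hi := (continuousOn_chartSection i).comp_continuous (continuous_fst.comp hU)
    fun p => p.1.2.1
  exact ((hj.inv₀ fun p => chartSection_ne_zero p.1.2.2).mul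
    (continuous_subtype_val.comp continuous_snd)).mul hi

def trivialisation (i j : Fin 2) : (parametrisedHopf ⁻¹' Uset i j) ≃ₜ Uset i j × QuatCircle where
  toFun x := (⟨parametrisedHopf x, x.2⟩, ⟨trivialisingMap i j x, trivialisingMap_mem_circle x.2⟩)
  invFun p := ⟨(⟨_, trivialisationInvFun_mem_sphere p⟩, p.1.1.2), by
    rw [Set.mem_preimage, parametrisedHopf, hopf_trivialisationInvFun]
    exact p.1.2⟩
  left_inv x := by
    obtain ⟨hi, hj⟩ := parametrisedHopf_mem_Uset_iff.1 x.2
    refine Subtype.ext (Prod.ext (Subtype.ext ?_) rfl)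
    change (chartSection j x.1.2)⁻¹ * (chartSection j x.1.2 * x.1.1 * (chartSection i (hopf x.1))⁻¹)
      * chartSection i (hopf x.1) = x.1.1
    simp only [mul_assoc, inv_mul_cancel_left₀ (chartSection_ne_zero hj),
      inv_mul_cancel₀ (chartSection_ne_zero hi), mul_one]
  right_inv p := by
    refine Prod.ext (Subtype.ext (Prod.ext (hopf_trivialisationInvFun p) rfl)) (Subtype.ext ?_)
    change chartSection j p.1.1.2 * ((chartSection j p.1.1.2)⁻¹ * p.2 * chartSection i p.1.1.1)
      * (chartSection i (hopf (_, p.1.1.2)))⁻¹ = p.2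
    rw [hopf_trivialisationInvFun]
    simp only [mul_assoc, mul_inv_cancel_left₀ (chartSection_ne_zero p.1.2.2),
      mul_inv_cancel₀ (chartSection_ne_zero p.1.2.1), mul_one]
  continuous_toFun :=
    (continuous_parametrisedHopf.comp continuous_subtype_val).subtype_mk _ |>.prodMk <|
      (continuousOn_trivialisingMap i j).domRestrict.subtype_mk _
  continuous_invFun :=
    ((continuous_trivialisationInvFun i j).subtype_mk _ |>.prodMk <|
      continuous_snd.comp (continuous_subtype_val.comp continuous_fst)).subtype_mk _

/-- The parametrised Hopf map `Φ` admits over `U_{i,j}` the well-defined continuous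
trivialising map `𝔗_{i,j}(h,[b₀:b₁]) = σ_j(b₀,b₁)·h·σ_i(c₀,c₁)⁻¹` with values in the unit
circle `S¹ ⊂ ℂ ⊂ ℍ`, and `(Φ, 𝔗_{i,j}) : Φ⁻¹(U_{i,j}) → U_{i,j} × S¹` is a
homeomorphism. -/
theorem local_trivialisation_of_parametrised_hopf (i j : Fin 2) :
    ∃ Φ : Metric.sphere (0 : ℍ[ℝ]) 1 × CP1 → CP1 × CP1,
      (∀ (h : Metric.sphere (0 : ℍ[ℝ]) 1) (b₀ b₁ : ℂ) (hb : ((b₀, b₁) : ℂ × ℂ) ≠ 0)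
        (hc : comps ((cq b₀ + cq b₁ * jq) * (h : ℍ[ℝ])) ≠ 0),
        Φ (h, Projectivization.mk ℂ (b₀, b₁) hb) =
          (Projectivization.mk ℂ _ hc, Projectivization.mk ℂ (b₀, b₁) hb)) ∧
      Continuous Φ ∧
      ∃ T : (Φ ⁻¹' Uset i j) → ℍ[ℝ],
        (∀ (x : Φ ⁻¹' Uset i j) (b₀ b₁ : ℂ) (hb : ((b₀, b₁) : ℂ × ℂ) ≠ 0),
          Projectivization.mk ℂ (b₀, b₁) hb = x.1.2 →
          T x = sigma' j b₀ b₁ * (x.1.1 : ℍ[ℝ]) *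
            (sigma' i (comps ((cq b₀ + cq b₁ * jq) * (x.1.1 : ℍ[ℝ]))).1
              (comps ((cq b₀ + cq b₁ * jq) * (x.1.1 : ℍ[ℝ]))).2)⁻¹) ∧
        (∀ x, ‖T x‖ = 1 ∧ (T x).imJ = 0 ∧ (T x).imK = 0) ∧
        Continuous T ∧
        ∃ e : (Φ ⁻¹' Uset i j) ≃ₜ
            (Uset i j) × {z : ℍ[ℝ] // ‖z‖ = 1 ∧ z.imJ = 0 ∧ z.imK = 0},
          ∀ x, ((e x).1 : CP1 × CP1) = Φ x.1 ∧ ((e x).2 : ℍ[ℝ]) = T x := by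
  refine ⟨parametrisedHopf, fun h b₀ b₁ hb hc => rfl, continuous_parametrisedHopf,
    fun x => trivialisingMap i j x, ?_, fun x => trivialisingMap_mem_circle x.2,
    (continuousOn_trivialisingMap i j).domRestrict, trivialisation i j, fun x => ⟨rfl, rfl⟩⟩
  rintro ⟨⟨h, ℓ⟩, hx⟩ b₀ b₁ hb rfl
  rfl
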